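/- arXiv:2106.02713 — 2 statements merged into one kernel-verified Lean document; each statement's English description precedes it below -/
import Mathlib

section
/- Let Σ = Σ_k λ_k u_k u_kᵀ ∈ ℝ^{N×N} with u₁,…,u_N an orthonormal basis of ℝ^N and λ_k ≥ 0; let η > 0 and m > 0. Suppose the matrix sequence (C_t)_{t∈ℕ} satisfies C_{t+1} = (I − ηΣ) C_t (I − ηΣ) + (η²/m)[Σ C_t Σ + Σ · Tr(Σ C_t)] with C₀ = Δ Δᵀ for some Δ ∈ ℝ^N, and set v_k = u_kᵀ Δ. Then for all k ≠ l and all t ∈ ℕ, u_kᵀ C_t u_l = (1 − ηλ_k − ηλ_l + η²(1 + 1/m) λ_k λ_l)^t · v_k v_l. -/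
open Matrix

/-!
In the eigenbasis of `S` the recursion is diagonal on off-diagonal entries: `I − ηS` and `S` are
symmetric with `uₖ` as eigenvectors, so `uₖᵀ (A Cₜ A) uₗ` picks up the two eigenvalues of `A`, while
the trace term contributes `Tr(S Cₜ) · uₖᵀ S uₗ = Tr(S Cₜ) λₗ ⟨uₖ, uₗ⟩ = 0` for `k ≠ l`.
Hence `uₖᵀ Cₜ uₗ` is multiplied by the same factor at every step.
-/

namespace Matrix

variable {ι n R : Type*} [Fintype ι]

theorem isSymm_sum_smul_vecMulVec_self [CommSemiring R] (lam : ι → R) (u : ι → n → R) :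
    (∑ k, lam k • vecMulVec (u k) (u k)).IsSymm := by
  simp only [IsSymm, transpose_sum, transpose_smul, transpose_vecMulVec]

variable [Fintype n]

theorem sum_smul_vecMulVec_self_mulVec [CommSemiring R] [DecidableEq ι] (lam : ι → R)
    (u : ι → n → R) (hu : ∀ k l, u k ⬝ᵥ u l = if k = l then 1 else 0) (j : ι) :
    (∑ k, lam k • vecMulVec (u k) (u k)) *ᵥ u j = lam j • u j := by
  simp [sum_mulVec, smul_mulVec, vecMulVec_mulVec, hu]

theorem one_sub_smul_mulVec_of_mulVec_eq_smul [CommRing R] [DecidableEq n] {A : Matrix n n R}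
    {x : n → R} {a : R} (c : R) (hx : A *ᵥ x = a • x) : (1 - c • A) *ᵥ x = (1 - c * a) • x := by
  rw [sub_mulVec, one_mulVec, smul_mulVec, hx, smul_smul, sub_smul, one_smul]

theorem dotProduct_mul_mul_mulVec_of_isSymm [CommSemiring R] {A B : Matrix n n R}
    (hA : A.IsSymm) {x y : n → R} {a b : R} (hx : A *ᵥ x = a • x) (hy : A *ᵥ y = b • y) :
    x ⬝ᵥ (A * B * A) *ᵥ y = a * b * (x ⬝ᵥ B *ᵥ y) := by
  have hx' : x ᵥ* A = a • x := by rw [← mulVec_transpose, hA.eq, hx]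
  rw [← mulVec_mulVec, ← mulVec_mulVec, dotProduct_mulVec, hx', hy, mulVec_smul,
    smul_dotProduct, dotProduct_smul, smul_eq_mul, smul_eq_mul]
  ring

end Matrix

theorem sgd_off_diagonal_evolution_general
    (N : ℕ) (u : Fin N → (Fin N → ℝ))
    (hu : ∀ k l, u k ⬝ᵥ u l = if k = l then (1 : ℝ) else 0)
    (lam : Fin N → ℝ)
    (S : Matrix (Fin N) (Fin N) ℝ)
    (hS : S = ∑ k, lam k • vecMulVec (u k) (u k))
    (η m : ℝ)
    (Δ : Fin N → ℝ) (C : ℕ → Matrix (Fin N) (Fin N) ℝ)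
    (hC0 : C 0 = vecMulVec Δ Δ)
    (hrec : ∀ t, C (t + 1) = (1 - η • S) * C t * (1 - η • S)
        + (η ^ 2 / m) • (S * C t * S + (S * C t).trace • S)) :
    ∀ k l, k ≠ l → ∀ t : ℕ,
      u k ⬝ᵥ (C t).mulVec (u l)
        = (1 - η * lam k - η * lam l + η ^ 2 * (1 + 1 / m) * lam k * lam l) ^ t
            * ((u k ⬝ᵥ Δ) * (u l ⬝ᵥ Δ)) := by
  intro k l hkl t
  have hSu : ∀ j, S *ᵥ u j = lam j • u j := hS ▸ sum_smul_vecMulVec_self_mulVec lam u hu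
  have hSsymm : S.IsSymm := hS ▸ isSymm_sum_smul_vecMulVec_self lam u
  have hPu : ∀ j, (1 - η • S) *ᵥ u j = (1 - η * lam j) • u j :=
    fun j => one_sub_smul_mulVec_of_mulVec_eq_smul η (hSu j)
  have hPsymm : (1 - η • S).IsSymm := isSymm_one.sub (hSsymm.smul η)
  have horth : u k ⬝ᵥ S *ᵥ u l = 0 := by
    rw [hSu, dotProduct_smul, hu, if_neg hkl, smul_zero]
  have hstep : ∀ t, u k ⬝ᵥ C (t + 1) *ᵥ u l
      = (1 - η * lam k - η * lam l + η ^ 2 * (1 + 1 / m) * lam k * lam l)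
        * (u k ⬝ᵥ C t *ᵥ u l) := by
    intro t
    rw [hrec, add_mulVec, dotProduct_add, smul_mulVec, dotProduct_smul, add_mulVec,
      dotProduct_add, smul_mulVec, dotProduct_smul, horth,
      dotProduct_mul_mul_mulVec_of_isSymm hPsymm (hPu k) (hPu l),
      dotProduct_mul_mul_mulVec_of_isSymm hSsymm (hSu k) (hSu l)]
    simp only [smul_eq_mul]
    ring
  induction t with
  | zero =>
    rw [hC0, pow_zero, one_mul, vecMulVec_mulVec, dotProduct_smul, dotProduct_comm Δ]
    rfl
  | succ t ih =>
    rw [hstep, ih]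
    ring

/-- Let `S = ∑ₖ λₖ uₖ uₖᵀ` with `u₁,…,u_N` orthonormal and `λₖ ≥ 0`;
let `η > 0`, `m > 0`.  If `C_{t+1} = (I − ηS) C_t (I − ηS) + (η²/m)[S C_t S + Tr(S C_t) S]`
with `C₀ = Δ Δᵀ` and `vₖ = uₖᵀ Δ`, then for all `k ≠ l` and all `t`,
`uₖᵀ C_t uₗ = (1 − ηλₖ − ηλₗ + η²(1 + 1/m) λₖ λₗ)^t · vₖ vₗ`. -/
theorem sgd_off_diagonal_evolution
    (N : ℕ) (hN : 1 ≤ N) (u : Fin N → (Fin N → ℝ))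
    (hu : ∀ k l, u k ⬝ᵥ u l = if k = l then (1 : ℝ) else 0)
    (lam : Fin N → ℝ) (hlam : ∀ k, 0 ≤ lam k)
    (S : Matrix (Fin N) (Fin N) ℝ)
    (hS : S = ∑ k, lam k • vecMulVec (u k) (u k))
    (η m : ℝ) (hη : 0 < η) (hm : 0 < m)
    (Δ : Fin N → ℝ) (C : ℕ → Matrix (Fin N) (Fin N) ℝ)
    (hC0 : C 0 = vecMulVec Δ Δ)
    (hrec : ∀ t, C (t + 1) = (1 - η • S) * C t * (1 - η • S)
        + (η ^ 2 / m) • (S * C t * S + (S * C t).trace • S)) :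
    ∀ k l, k ≠ l → ∀ t : ℕ,
      u k ⬝ᵥ (C t).mulVec (u l)
        = (1 - η * lam k - η * lam l + η ^ 2 * (1 + 1 / m) * lam k * lam l) ^ t
            * ((u k ⬝ᵥ Δ) * (u l ⬝ᵥ Δ)) :=
  sgd_off_diagonal_evolution_general N u hu lam S hS η m Δ C hC0 hrec
end

section
/- Let N ≥ 1, let μ be a probability distribution of a random vector ψ on ℝ^N with finite fourth moments (E|ψ_i ψ_j ψ_k ψ_l| < ∞ for all indices), and let Σ = E[ψψᵀ]. Let ψ₁,…,ψ_m be i.i.d. with distribution μ, let η > 0, let Δ ∈ ℝ^N be fixed with C = ΔΔᵀ, and define Δ' = Δ − (η/m) Σ_{i=1}^m ψᵢ (ψᵢᵀ Δ). Then E[Δ' Δ'ᵀ] = C − η Σ C − η C Σ + η² ((m−1)/m) Σ C Σ + (η²/m) E[ψψᵀ C ψψᵀ]. -/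
/-!
Write `g ψ = ψ (ψᵀΔ)`, so that `Δ' = Δ - (η/m) ∑ₐ g(ψₐ)` and `E g = ΣΔ`. Expanding `Δ'Δ'ᵀ`, the
linear terms give `-η ΣC - η CΣ`. The quadratic term is a double sum over pairs of samples: the
`m` diagonal pairs contribute `E[g gᵀ] = E[ψψᵀCψψᵀ]`, while for the `m(m-1)` off-diagonal pairs
independence factors the expectation into `E g E gᵀ = ΣCΣ`, using the symmetry of `Σ`.
-/

open MeasureTheory ProbabilityTheory Matrix

section IIDSample

variable {ι α : Type*} [Fintype ι] [MeasurableSpace α] {μ : Measure α} [IsProbabilityMeasure μ]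
  {f h : α → ℝ}

lemma indepFun_comp_eval_pi {a b : ι} (hab : a ≠ b) (hf : AEMeasurable f μ)
    (hh : AEMeasurable h μ) :
    IndepFun (fun X : ι → α => f (X a)) (fun X => h (X b)) (Measure.pi fun _ => μ) := by
  have hmap : ∀ c : ι, Measure.map (fun X : ι → α => id (X c)) (Measure.pi fun _ => μ) = μ :=
    fun c => (measurePreserving_eval (fun _ => μ) c).map_eq
  exact ((iIndepFun_pi (X := fun _ => id) fun _ => aemeasurable_id).indepFun hab).comp₀
    (measurable_pi_apply a).aemeasurable (measurable_pi_apply b).aemeasurable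
    (by rwa [hmap]) (by rwa [hmap])

lemma integrable_comp_eval_mul_comp_eval (hf : Integrable f μ) (hh : Integrable h μ)
    (hfh : Integrable (fun x => f x * h x) μ) (a b : ι) :
    Integrable (fun X : ι → α => f (X a) * h (X b)) (Measure.pi fun _ => μ) := by
  rcases eq_or_ne a b with rfl | hab
  · exact integrable_comp_eval (μ := fun _ => μ) hfh
  · exact (indepFun_comp_eval_pi hab hf.aemeasurable hh.aemeasurable).integrable_mul
      (integrable_comp_eval hf) (integrable_comp_eval hh)

lemma integral_comp_eval_mul_comp_eval [DecidableEq ι] (hf : Integrable f μ)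
    (hh : Integrable h μ) (a b : ι) :
    ∫ X : ι → α, f (X a) * h (X b) ∂(Measure.pi fun _ => μ)
      = if a = b then ∫ x, f x * h x ∂μ else (∫ x, f x ∂μ) * ∫ x, h x ∂μ := by
  split_ifs with hab
  · subst hab
    exact integral_comp_eval (μ := fun _ => μ) (hf.aestronglyMeasurable.mul hh.aestronglyMeasurable)
  · rw [← integral_comp_eval (μ := fun _ => μ) (i := a) hf.aestronglyMeasurable,
      ← integral_comp_eval (μ := fun _ => μ) (i := b) hh.aestronglyMeasurable]
    exact (indepFun_comp_eval_pi hab hf.aemeasurable hh.aemeasurable).integral_mul_eq_mul_integral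
      (integrable_comp_eval hf).aestronglyMeasurable (integrable_comp_eval hh).aestronglyMeasurable

lemma integrable_sum_comp_eval (hf : Integrable f μ) :
    Integrable (fun X : ι → α => ∑ a, f (X a)) (Measure.pi fun _ => μ) :=
  integrable_finsetSum _ fun _ _ => integrable_comp_eval hf

lemma integral_sum_comp_eval (hf : Integrable f μ) :
    ∫ X : ι → α, ∑ a, f (X a) ∂(Measure.pi fun _ => μ) = Fintype.card ι * ∫ x, f x ∂μ := by
  rw [integral_finsetSum _ fun _ _ => integrable_comp_eval hf]
  simp [integral_comp_eval (μ := fun _ => μ) hf.aestronglyMeasurable]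

lemma integrable_sum_mul_sum_comp_eval (hf : Integrable f μ) (hh : Integrable h μ)
    (hfh : Integrable (fun x => f x * h x) μ) :
    Integrable (fun X : ι → α => (∑ a, f (X a)) * ∑ b, h (X b)) (Measure.pi fun _ => μ) := by
  simp_rw [Finset.sum_mul_sum]
  exact integrable_finsetSum _ fun a _ => integrable_finsetSum _ fun b _ =>
    integrable_comp_eval_mul_comp_eval hf hh hfh a b

lemma integral_sum_mul_sum_comp_eval (hf : Integrable f μ) (hh : Integrable h μ)
    (hfh : Integrable (fun x => f x * h x) μ) :
    ∫ X : ι → α, (∑ a, f (X a)) * ∑ b, h (X b) ∂(Measure.pi fun _ => μ)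
      = Fintype.card ι * ∫ x, f x * h x ∂μ
        + Fintype.card ι * (Fintype.card ι - 1) * ((∫ x, f x ∂μ) * ∫ x, h x ∂μ) := by
  classical
  simp_rw [Finset.sum_mul_sum]
  rw [integral_finsetSum _ fun a _ => integrable_finsetSum _ fun b _ =>
    integrable_comp_eval_mul_comp_eval hf hh hfh a b]
  simp_rw [integral_finsetSum _ fun b _ => integrable_comp_eval_mul_comp_eval hf hh hfh _ b,
    integral_comp_eval_mul_comp_eval hf hh, Finset.sum_ite]
  simp only [Finset.filter_eq, Finset.mem_univ, ↓reduceIte, Finset.sum_const, Finset.card_singleton,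
    one_smul, Finset.filter_ne, Finset.card_erase_of_mem, Finset.card_univ, nsmul_eq_mul, smul_add,
    add_right_inj]
  rcases Nat.eq_zero_or_pos (Fintype.card ι) with h0 | hpos
  · simp [h0]
  · rw [Nat.cast_pred hpos]
    ring

end IIDSample

lemma integral_sub_mul_mul_sub_mul {Ω : Type*} [MeasurableSpace Ω] {P : Measure Ω}
    [IsProbabilityMeasure P] {u v : Ω → ℝ} (hu : Integrable u P) (hv : Integrable v P)
    (huv : Integrable (fun ω => u ω * v ω) P) (x y c : ℝ) :
    ∫ ω, (x - c * u ω) * (y - c * v ω) ∂P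
      = x * y - c * x * ∫ ω, v ω ∂P - c * y * ∫ ω, u ω ∂P + c ^ 2 * ∫ ω, u ω * v ω ∂P := by
  have hexpand : ∀ ω, (x - c * u ω) * (y - c * v ω)
      = x * y - (c * x) * v ω - (c * y) * u ω + c ^ 2 * (u ω * v ω) := fun ω => by ring
  have hconst_v : Integrable (fun ω => x * y - (c * x) * v ω) P :=
    (integrable_const _).sub (hv.const_mul _)
  have hlin : Integrable (fun ω => x * y - (c * x) * v ω - (c * y) * u ω) P :=
    hconst_v.sub (hu.const_mul _)
  simp_rw [hexpand]
  rw [integral_add hlin (huv.const_mul _), integral_sub hconst_v (hu.const_mul _),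
    integral_sub (integrable_const _) (hv.const_mul _)]
  simp [integral_const_mul]

section Moments

variable {ι : Type*} [Fintype ι] {μ : Measure (ι → ℝ)}

lemma integrable_mul_apply_of_fourth [IsFiniteMeasure μ]
    (h4 : ∀ i j k l : ι, Integrable (fun ψ => ψ i * ψ j * ψ k * ψ l) μ) (i j : ι) :
    Integrable (fun ψ => ψ i * ψ j) μ :=
  ((memLp_two_iff_integrable_sq (by fun_prop)).2
    (by simpa only [sq, mul_assoc] using h4 i j i j)).integrable one_le_two

lemma apply_mul_dotProduct_eq_sum (ψ v : ι → ℝ) (i : ι) :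
    ψ i * (ψ ⬝ᵥ v) = ∑ k, v k * (ψ i * ψ k) := by
  simp only [dotProduct, Finset.mul_sum]
  exact Finset.sum_congr rfl fun k _ => by ring

lemma integrable_apply_mul_dotProduct (h2 : ∀ i j : ι, Integrable (fun ψ => ψ i * ψ j) μ)
    (v : ι → ℝ) (i : ι) : Integrable (fun ψ => ψ i * (ψ ⬝ᵥ v)) μ := by
  simp_rw [apply_mul_dotProduct_eq_sum]
  exact integrable_finsetSum _ fun k _ => (h2 i k).const_mul _

lemma integral_apply_mul_dotProduct {S : Matrix ι ι ℝ} (hS : ∀ i j, S i j = ∫ ψ, ψ i * ψ j ∂μ)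
    (h2 : ∀ i j : ι, Integrable (fun ψ => ψ i * ψ j) μ) (v : ι → ℝ) (i : ι) :
    ∫ ψ, ψ i * (ψ ⬝ᵥ v) ∂μ = (S *ᵥ v) i := by
  simp_rw [apply_mul_dotProduct_eq_sum]
  rw [integral_finsetSum _ fun k _ => (h2 i k).const_mul _]
  simp [mulVec, dotProduct, hS, integral_const_mul, mul_comm]

lemma integrable_apply_mul_dotProduct_mul_apply_mul_dotProduct
    (h4 : ∀ i j k l : ι, Integrable (fun ψ => ψ i * ψ j * ψ k * ψ l) μ) (v : ι → ℝ) (i j : ι) :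
    Integrable (fun ψ => ψ i * (ψ ⬝ᵥ v) * (ψ j * (ψ ⬝ᵥ v))) μ := by
  have hexpand : ∀ ψ : ι → ℝ, ψ i * (ψ ⬝ᵥ v) * (ψ j * (ψ ⬝ᵥ v))
      = ∑ k, ∑ l, (v k * v l) * (ψ i * ψ k * ψ j * ψ l) := fun ψ => by
    rw [apply_mul_dotProduct_eq_sum, apply_mul_dotProduct_eq_sum, Finset.sum_mul_sum]
    exact Finset.sum_congr rfl fun k _ => Finset.sum_congr rfl fun l _ => by ring
  simp_rw [hexpand]
  exact integrable_finsetSum _ fun k _ => integrable_finsetSum _ fun l _ =>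
    (h4 i k j l).const_mul _

end Moments

lemma dotProduct_vecMulVec_mulVec {ι : Type*} [Fintype ι] (ψ v : ι → ℝ) :
    ψ ⬝ᵥ (vecMulVec v v *ᵥ ψ) = (ψ ⬝ᵥ v) ^ 2 := by
  rw [vecMulVec_mulVec, op_smul_eq_smul, dotProduct_smul, smul_eq_mul, dotProduct_comm v, sq]

theorem sgd_one_step_error_matrix_general_general
    (N : ℕ) (μ : Measure (Fin N → ℝ)) [IsProbabilityMeasure μ]
    (h4 : ∀ i j k l : Fin N, Integrable (fun ψ => ψ i * ψ j * ψ k * ψ l) μ)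
    (S : Matrix (Fin N) (Fin N) ℝ) (hS : ∀ i j, S i j = ∫ ψ, ψ i * ψ j ∂μ)
    (m : ℕ) (hm : 1 ≤ m) (η : ℝ)
    (Δ : Fin N → ℝ) (C : Matrix (Fin N) (Fin N) ℝ) (hC : C = vecMulVec Δ Δ) :
    ∀ i j : Fin N,
      (∫ X : Fin m → (Fin N → ℝ),
          (Δ i - (η / m) * ∑ a, X a i * (X a ⬝ᵥ Δ)) *
          (Δ j - (η / m) * ∑ a, X a j * (X a ⬝ᵥ Δ))
        ∂(Measure.pi fun _ : Fin m => μ))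
      = (C - η • (S * C) - η • (C * S) + (η ^ 2 * ((m : ℝ) - 1) / m) • (S * C * S)
          + (η ^ 2 / m) • Matrix.of (fun i j => ∫ ψ, ψ i * (ψ ⬝ᵥ C.mulVec ψ) * ψ j ∂μ)) i j := by
  intro i j
  subst hC
  have h2 := integrable_mul_apply_of_fourth h4
  have hg := integrable_apply_mul_dotProduct h2 Δ
  have hgg := integrable_apply_mul_dotProduct_mul_apply_mul_dotProduct h4 Δ i j
  have hvecMul_eq_mulVec : Δ ᵥ* S = S *ᵥ Δ := by
    rw [← mulVec_transpose]
    congr 1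
    ext k l
    simp only [transpose_apply, hS, mul_comm]
  have hquartic : ∫ ψ, ψ i * (ψ ⬝ᵥ vecMulVec Δ Δ *ᵥ ψ) * ψ j ∂μ
      = ∫ ψ, ψ i * (ψ ⬝ᵥ Δ) * (ψ j * (ψ ⬝ᵥ Δ)) ∂μ := by
    simp_rw [dotProduct_vecMulVec_mulVec]
    congr with ψ
    ring
  rw [integral_sub_mul_mul_sub_mul (integrable_sum_comp_eval (hg i))
      (integrable_sum_comp_eval (hg j)) (integrable_sum_mul_sum_comp_eval (hg i) (hg j) hgg),
    integral_sum_comp_eval (hg i), integral_sum_comp_eval (hg j),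
    integral_sum_mul_sum_comp_eval (hg i) (hg j) hgg, integral_apply_mul_dotProduct hS h2,
    integral_apply_mul_dotProduct hS h2]
  have hm0 : (m : ℝ) ≠ 0 := Nat.cast_ne_zero.mpr (by omega)
  simp only [Fintype.card_fin, mul_vecMulVec, vecMulVec_mul, hvecMul_eq_mulVec, smul_of, Matrix.add_apply,
    Matrix.sub_apply, vecMulVec_apply, Matrix.smul_apply, smul_eq_mul, of_apply, Pi.smul_apply,
    hquartic]
  field_simp
  ring

/-- Let `μ` be a probability distribution on `ℝ^N` with finite fourth
moments and second-moment matrix `S`.  Let `ψ₁,…,ψ_m` be i.i.d. with distribution `μ`,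
`η > 0`, `Δ` fixed with `C = Δ Δᵀ`, and `Δ' = Δ − (η/m) ∑ᵢ ψᵢ (ψᵢᵀ Δ)`.  Then (entrywise)
`E[Δ' Δ'ᵀ] = C − η S C − η C S + η²((m−1)/m) S C S + (η²/m) E[ψψᵀ C ψψᵀ]`. -/
theorem sgd_one_step_error_matrix_general
    (N : ℕ) (hN : 1 ≤ N) (μ : Measure (Fin N → ℝ)) [IsProbabilityMeasure μ]
    (h4 : ∀ i j k l : Fin N, Integrable (fun ψ => ψ i * ψ j * ψ k * ψ l) μ)
    (S : Matrix (Fin N) (Fin N) ℝ) (hS : ∀ i j, S i j = ∫ ψ, ψ i * ψ j ∂μ)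
    (m : ℕ) (hm : 1 ≤ m) (η : ℝ) (hη : 0 < η)
    (Δ : Fin N → ℝ) (C : Matrix (Fin N) (Fin N) ℝ) (hC : C = vecMulVec Δ Δ) :
    ∀ i j : Fin N,
      (∫ X : Fin m → (Fin N → ℝ),
          (Δ i - (η / m) * ∑ a, X a i * (X a ⬝ᵥ Δ)) *
          (Δ j - (η / m) * ∑ a, X a j * (X a ⬝ᵥ Δ))
        ∂(Measure.pi fun _ : Fin m => μ))
      = (C - η • (S * C) - η • (C * S) + (η ^ 2 * ((m : ℝ) - 1) / m) • (S * C * S)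
          + (η ^ 2 / m) • Matrix.of (fun i j => ∫ ψ, ψ i * (ψ ⬝ᵥ C.mulVec ψ) * ψ j ∂μ)) i j :=
  sgd_one_step_error_matrix_general_general N μ h4 S hS m hm η Δ C hC
end
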